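/- Let $a, b, u, v$ be integers with $1 \le a \le b$, $u \ge 0$, $v \ge 0$. If $(u+1)(v+1) = 2ab$ and $a(v+1) + b(u+1) = 3ab$, then either ($u = a-1$ and $v = 2b-1$) or ($u = 2a-1$ and $v = b-1$). -/
import Mathlib

/-- Classification of Ulrich line bundles on `ℙ¹ × ℙ¹` embedded by `O(a,b)`:
the numerical Ulrich conditions force `(u,v) = (a-1, 2b-1)` or `(u,v) = (2a-1, b-1)`. -/
theorem ulrich_line_bundles_on_quadric (a b u v : ℤ)
    (ha : 1 ≤ a) (hab : a ≤ b) (hu : 0 ≤ u) (hv : 0 ≤ v)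
    (h1 : (u + 1) * (v + 1) = 2 * a * b)
    (h2 : a * (v + 1) + b * (u + 1) = 3 * a * b) :
    (u = a - 1 ∧ v = 2 * b - 1) ∨ (u = 2 * a - 1 ∧ v = b - 1) := by
  have hb : (0:ℤ) < b := lt_of_lt_of_le ha hab
  have ha0 : a ≠ 0 := by linarith
  have key : b * ((u + 1 - a) * (u + 1 - 2 * a)) = 0 := by
    linear_combination (u + 1) * h2 - a * h1
  rcases mul_eq_zero.mp key with h | h
  · exact absurd h hb.ne'
  rcases mul_eq_zero.mp h with h | h
  · left
    have hu' : u = a - 1 := by linarith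
    refine ⟨hu', ?_⟩
    have : a * (v + 1) = a * (2 * b) := by
      rw [hu'] at h1; linarith [h1]
    have := mul_left_cancel₀ ha0 this
    linarith
  · right
    have hu' : u = 2 * a - 1 := by linarith
    refine ⟨hu', ?_⟩
    have : (2 * a) * (v + 1) = (2 * a) * b := by
      rw [hu'] at h1; linarith [h1]
    have := mul_left_cancel₀ (by positivity : (2:ℤ) * a ≠ 0) this
    linarith
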